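/- Let π be a Borel probability measure on ℙ(V), and let η > 0 and C > 0 be such that ∫_{ℙ(V)} δ(x,y)^{−η} π(dx) ≤ C for every y ∈ ℙ(V*). Let A > 0 and for n ≥ 2 set M_n = ⌊A log² n⌋. Then for every integer n ≥ 2, every y ∈ ℙ(V*) and every nonnegative bounded Borel function φ on ℙ(V): Σ_{k=0}^{M_n} (k+1)·a_n·π(φ_{n,k}^y) ≤ −d_φ(y) + 2·a_n·π(φ), where d_φ(y) := ∫_{ℙ(V)} φ(x) log δ(x,y) π(dx) and π(ψ) := ∫ ψ dπ. -/

import Mathlib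

open MeasureTheory Real Filter
open scoped InnerProductSpace ENNReal Topology

noncomputable section

abbrev V (d : ℕ) := EuclideanSpace ℝ (Fin d)
abbrev PV (d : ℕ) := Projectivization ℝ (V d)

/-- `δ(x,y) = |⟨f,v⟩| / (‖f‖‖v‖)` for `x = ℝv ∈ ℙ(V)` and `y = ℝf ∈ ℙ(V*)`, where the
dual space `V*` is identified with `V = ℝ^d` via the Euclidean inner product. -/
def delta (d : ℕ) (x y : PV d) : ℝ := |⟪y.rep, x.rep⟫_ℝ| / (‖y.rep‖ * ‖x.rep‖)

/-- The angular distance `d(x,x') = ‖v ∧ v'‖/(‖v‖‖v'‖)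
  = sqrt(‖v‖²‖v'‖² − ⟨v,v'⟩²)/(‖v‖‖v'‖)` on the projective space. -/
def angDist (d : ℕ) (x x' : PV d) : ℝ :=
  Real.sqrt (‖x.rep‖ ^ 2 * ‖x'.rep‖ ^ 2 - ⟪x.rep, x'.rep⟫_ℝ ^ 2) / (‖x.rep‖ * ‖x'.rep‖)

instance (d : ℕ) : MeasurableSpace (PV d) :=
  @Quotient.instMeasurableSpace _ (projectivizationSetoid ℝ (V d)) _
instance (d : ℕ) : TopologicalSpace (PV d) :=
  @instTopologicalSpaceQuotient _ (projectivizationSetoid ℝ (V d)) _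

/-- The uniform distribution function `U(t) = min(max(t,0),1)` on `[0,1]`. -/
def Ufun (t : ℝ) : ℝ := min (max t 0) 1

/-- `a_n = 1 / log n`. -/
def an (n : ℕ) : ℝ := 1 / Real.log n

/-- `U_{n,k}(t) = U((t − (k−1)a_n)/a_n)`. -/
def Unk (n k : ℕ) (t : ℝ) : ℝ := Ufun ((t - ((k : ℝ) - 1) * an n) / an n)

/-- `h_{n,k} = U_{n,k} − U_{n,k+1}`. -/
def hnk (n k : ℕ) (t : ℝ) : ℝ := Unk n k t - Unk n (k + 1) t

open Classical in
/-- `χ_{n,k}^y(x) = h_{n,k}(−log δ(x,y))`, with the convention `log 0 = −∞`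
(so that `χ_{n,k}^y(x) = 0` when `δ(x,y) = 0`). -/
def chi (d n k : ℕ) (y x : PV d) : ℝ :=
  if delta d x y = 0 then 0 else hnk n k (-Real.log (delta d x y))

open Classical in
/-- `χ̄_{n,k}^y(x) = U_{n,k}(−log δ(x,y))`, with the convention `log 0 = −∞`
(so that `χ̄_{n,k}^y(x) = 1` when `δ(x,y) = 0`). -/
def chibar (d n k : ℕ) (y x : PV d) : ℝ :=
  if delta d x y = 0 then 1 else Unk n k (-Real.log (delta d x y))

/-- `M_n = ⌊A log² n⌋`. -/
def Mn (A : ℝ) (n : ℕ) : ℕ := Nat.floor (A * Real.log n ^ 2)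

open Classical in
/-- `φ_{n,k}^y = φ·χ_{n,k}^y` for `0 ≤ k ≤ M_n − 1` and `φ_{n,M_n}^y = φ·χ̄_{n,M_n}^y`. -/
def phiNK (d : ℕ) (A : ℝ) (n k : ℕ) (y : PV d) (φ : PV d → ℝ) (x : PV d) : ℝ :=
  φ x * (if k = Mn A n then chibar d n k y x else chi d n k y x)

lemma an_pos {n : ℕ} (hn : 2 ≤ n) : 0 < an n := by
  have h1 : (1:ℝ) < (n:ℝ) := by exact_mod_cast lt_of_lt_of_le one_lt_two hn
  exact one_div_pos.mpr (Real.log_pos h1)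

lemma Ufun_nonneg (t : ℝ) : 0 ≤ Ufun t := le_min (le_max_right t 0) one_pos.le
lemma Ufun_le_one (t : ℝ) : Ufun t ≤ 1 := min_le_right _ _
lemma Ufun_mono : Monotone Ufun := (monotone_id.max monotone_const).min monotone_const
lemma Ufun_of_nonpos {t : ℝ} (ht : t ≤ 0) : Ufun t = 0 := by
  simp [Ufun, max_eq_right ht]

lemma Unk_nonneg (n k : ℕ) (t : ℝ) : 0 ≤ Unk n k t := Ufun_nonneg _
lemma Unk_le_one (n k : ℕ) (t : ℝ) : Unk n k t ≤ 1 := Ufun_le_one _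

lemma Unk_succ_le {n : ℕ} (ha : 0 < an n) (k : ℕ) (t : ℝ) :
    Unk n (k + 1) t ≤ Unk n k t := by
  apply Ufun_mono
  apply div_le_div_of_nonneg_right ?_ ha.le
  have h : ((k:ℝ) - 1) * an n ≤ (((k:ℕ) + 1 : ℕ) - 1 : ℝ) * an n := by
    apply mul_le_mul_of_nonneg_right ?_ ha.le
    push_cast; linarith
  linarith

lemma Unk_eq_zero {n k : ℕ} (ha : 0 < an n) {t : ℝ} (h : t ≤ ((k:ℝ) - 1) * an n) :
    Unk n k t = 0 := by
  apply Ufun_of_nonpos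
  apply div_nonpos_of_nonpos_of_nonneg (by linarith) ha.le

lemma delta_nonneg (d : ℕ) (x y : PV d) : 0 ≤ delta d x y :=
  div_nonneg (abs_nonneg _) (by positivity)
lemma delta_le_one (d : ℕ) (x y : PV d) : delta d x y ≤ 1 :=
  div_le_one_of_le₀ (abs_real_inner_le_norm _ _) (by positivity)

lemma delta_mk (d : ℕ) (v : V d) (hv : v ≠ 0) (y : PV d) :
    delta d (Projectivization.mk ℝ v hv) y = |⟪y.rep, v⟫_ℝ| / (‖y.rep‖ * ‖v‖) := by
  obtain ⟨c, hc⟩ := Projectivization.exists_smul_eq_mk_rep ℝ v hv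
  rw [delta, ← hc]
  have hc0 : (c : ℝ) ≠ 0 := c.ne_zero
  rw [Units.smul_def, real_inner_smul_right, norm_smul, abs_mul]
  simp only [Real.norm_eq_abs]
  rw [show ‖Projectivization.rep y‖ * (|(c:ℝ)| * ‖v‖)
      = |(c:ℝ)| * (‖Projectivization.rep y‖ * ‖v‖) by ring,
    mul_div_mul_left _ _ (abs_ne_zero.mpr hc0)]

lemma measurable_delta (d : ℕ) (y : PV d) : Measurable (fun x => delta d x y) := by
  rw [show (fun x => delta d x y) = fun x : Quotient (projectivizationSetoid ℝ (V d)) =>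
    delta d x y from rfl]
  refine (measurable_from_quotient (f := fun x : Quotient (projectivizationSetoid ℝ (V d)) =>
    delta d x y)).mpr ?_
  have h : (fun x : Quotient (projectivizationSetoid ℝ (V d)) => delta d x y) ∘ Quotient.mk''
      = fun v : {v : V d // v ≠ 0} => |⟪y.rep, v.1⟫_ℝ| / (‖y.rep‖ * ‖v.1‖) := by
    funext v
    exact delta_mk d v.1 v.2 y
  rw [h]
  have hm : Measurable (fun v : V d => |⟪y.rep, v⟫_ℝ| / (‖y.rep‖ * ‖v‖)) :=
    ((measurable_const.inner measurable_id).abs).div (measurable_const.mul measurable_norm)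
  exact hm.comp measurable_subtype_coe

lemma continuous_Ufun : Continuous Ufun :=
  (continuous_id.max continuous_const).min continuous_const

lemma continuous_Unk (n k : ℕ) : Continuous (Unk n k) :=
  continuous_Ufun.comp ((continuous_id.sub continuous_const).div_const _)

lemma tele (g : ℕ → ℝ) (M : ℕ) :
    ∑ k ∈ Finset.range M, ((k:ℝ) + 1) * (g k - g (k + 1))
      = (∑ k ∈ Finset.range M, g k) - (M:ℝ) * g M := by
  induction M with
  | zero => simp
  | succ m ih => rw [Finset.sum_range_succ, ih, Finset.sum_range_succ]; push_cast; ring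

lemma sumU_le (n m : ℕ) (ha : 0 < an n) {t : ℝ} (ht : 0 ≤ t) :
    an n * ∑ k ∈ Finset.range m, Unk n k t ≤ t + 2 * an n := by
  classical
  set a := an n with ha'
  set N := Nat.floor (t / a) + 2 with hN
  have h1 : ∑ k ∈ Finset.range m, Unk n k t
      ≤ ∑ k ∈ Finset.range m, (if ((k:ℝ) - 1) * a < t then (1:ℝ) else 0) := by
    apply Finset.sum_le_sum; intro k _
    by_cases h : ((k:ℝ) - 1) * a < t
    · simpa [h] using Unk_le_one n k t
    · simpa [h] using le_of_eq (Unk_eq_zero ha (not_lt.1 h))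
  have h2 : ∑ k ∈ Finset.range m, (if ((k:ℝ) - 1) * a < t then (1:ℝ) else 0) ≤ (N:ℝ) := by
    rw [Finset.sum_boole (fun k : ℕ => ((k:ℝ) - 1) * a < t) (Finset.range m)]
    have hsub : (Finset.range m).filter (fun k : ℕ => ((k:ℝ) - 1) * a < t)
        ⊆ Finset.range N := by
      intro k hk
      simp only [Finset.mem_filter, Finset.mem_range] at hk ⊢
      have h3 : ((k:ℝ) - 1) < t / a := (lt_div_iff₀ ha).mpr hk.2
      have h4 : t / a < (Nat.floor (t / a) : ℝ) + 1 := Nat.lt_floor_add_one _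
      have h5 : (k:ℝ) < (N:ℝ) := by rw [hN]; push_cast; linarith
      exact Nat.cast_lt.mp h5
    have hcard : ((Finset.range m).filter (fun k : ℕ => ((k:ℝ) - 1) * a < t)).card ≤ N :=
      (Finset.card_le_card hsub).trans_eq (Finset.card_range N)
    exact Nat.cast_le.mpr hcard
  have h6 : (N:ℝ) ≤ t / a + 2 := by
    have := Nat.floor_le (div_nonneg ht ha.le)
    rw [hN]; push_cast; linarith
  calc a * ∑ k ∈ Finset.range m, Unk n k t ≤ a * (t / a + 2) :=
        mul_le_mul_of_nonneg_left ((h1.trans h2).trans h6) ha.le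
    _ = t + 2 * a := by field_simp


lemma abs_chi_le_one {d n k : ℕ} (ha : 0 < an n) (y x : PV d) : |chi d n k y x| ≤ 1 := by
  rw [chi]
  split_ifs with h
  · simp
  · rw [hnk, abs_le]
    constructor
    · linarith [Unk_succ_le ha k (-Real.log (delta d x y)),
        Unk_le_one n (k + 1) (-Real.log (delta d x y))]
    · linarith [Unk_le_one n k (-Real.log (delta d x y)),
        Unk_nonneg n (k + 1) (-Real.log (delta d x y))]

lemma abs_chibar_le_one {d n k : ℕ} (y x : PV d) : |chibar d n k y x| ≤ 1 := by
  rw [chibar]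
  split_ifs with h
  · simp
  · rw [abs_le]
    exact ⟨by linarith [Unk_nonneg n k (-Real.log (delta d x y))],
      Unk_le_one n k (-Real.log (delta d x y))⟩

lemma key_pointwise (d : ℕ) (A : ℝ) (n : ℕ) (hn : 2 ≤ n) (y x : PV d) (φ : PV d → ℝ)
    (hφ : 0 ≤ φ x) (hδ : delta d x y ≠ 0) :
    ∑ k ∈ Finset.range (Mn A n + 1), ((k:ℝ) + 1) * an n * phiNK d A n k y φ x
      ≤ -(φ x * Real.log (delta d x y)) + 2 * an n * φ x := by
  have ha := an_pos hn
  have hδpos : 0 < delta d x y := lt_of_le_of_ne (delta_nonneg d x y) (Ne.symm hδ)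
  set t := -Real.log (delta d x y) with htdef
  have ht : 0 ≤ t :=
    neg_nonneg.mpr (Real.log_nonpos (delta_nonneg d x y) (delta_le_one d x y))
  set M := Mn A n with hM
  have e1 : ∀ k ∈ Finset.range (M + 1),
      ((k:ℝ) + 1) * an n * phiNK d A n k y φ x
        = (φ x * an n) * (((k:ℝ) + 1) *
            (if k = M then Unk n k t else Unk n k t - Unk n (k + 1) t)) := by
    intro k _
    rw [phiNK]
    by_cases h : k = M
    · simp only [← hM, if_pos h, chibar, if_neg hδ]
      ring
    · simp only [← hM, if_neg h, chi, if_neg hδ, hnk]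
      ring
  rw [Finset.sum_congr rfl e1, ← Finset.mul_sum]
  have e2 : ∑ k ∈ Finset.range (M + 1), ((k:ℝ) + 1) *
      (if k = M then Unk n k t else Unk n k t - Unk n (k + 1) t)
      = ∑ k ∈ Finset.range (M + 1), Unk n k t := by
    rw [Finset.sum_range_succ, if_pos rfl,
      Finset.sum_congr rfl (fun k hk => by
        rw [if_neg (Nat.ne_of_lt (Finset.mem_range.mp hk))]),
      tele (fun k => Unk n k t) M, Finset.sum_range_succ]
    ring
  rw [e2]
  have h3 := sumU_le n (M + 1) ha ht
  calc (φ x * an n) * ∑ k ∈ Finset.range (M + 1), Unk n k t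
      = φ x * (an n * ∑ k ∈ Finset.range (M + 1), Unk n k t) := by ring
    _ ≤ φ x * (t + 2 * an n) := mul_le_mul_of_nonneg_left h3 hφ
    _ = -(φ x * Real.log (delta d x y)) + 2 * an n * φ x := by rw [htdef]; ring

/-- Upper bound of Lemma 3.8 (Xiao–Grama–Liu):
`Σ_{k=0}^{M_n} (k+1) a_n pr(φ_{n,k}^y) ≤ −d_φ(y) + 2 a_n pr(φ)`. -/
theorem partition_sum_upper
    (d : ℕ) (hd : 1 ≤ d)
    (pr : Measure (PV d)) (hπ : IsProbabilityMeasure pr)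
    (η C : ℝ) (hη : 0 < η) (hC : 0 < C)
    (hmom : ∀ y : PV d, ∫⁻ x, ENNReal.ofReal (delta d x y) ^ (-η) ∂pr ≤ ENNReal.ofReal C)
    (A : ℝ) (hA : 0 < A) (n : ℕ) (hn : 2 ≤ n) (y : PV d)
    (φ : PV d → ℝ) (hφmeas : Measurable φ) (hφpos : ∀ x, 0 ≤ φ x)
    (hφbdd : BddAbove (Set.range fun x => |φ x|)) :
    ∑ k ∈ Finset.range (Mn A n + 1),
        ((k : ℝ) + 1) * an n * ∫ x, phiNK d A n k y φ x ∂pr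
      ≤ -(∫ x, φ x * Real.log (delta d x y) ∂pr) + 2 * an n * ∫ x, φ x ∂pr := by
  classical
  obtain ⟨B, hB⟩ : ∃ B : ℝ, ∀ x, |φ x| ≤ B := by
    obtain ⟨B, hB⟩ := hφbdd
    exact ⟨B, fun x => hB (Set.mem_range_self x)⟩
  have ha := an_pos hn
  have hδmeas := measurable_delta d y
  have hlogmeas : Measurable (fun x : PV d => -Real.log (delta d x y)) :=
    (Real.measurable_log.comp hδmeas).neg
  have hset : MeasurableSet {x : PV d | delta d x y = 0} :=
    hδmeas (measurableSet_singleton 0)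
  have hchimeas : ∀ k, Measurable (fun x => chi d n k y x) := by
    intro k
    simp only [chi]
    exact Measurable.ite hset measurable_const
      ((((continuous_Unk n k).sub (continuous_Unk n (k + 1))).measurable).comp hlogmeas)
  have hchibarmeas : ∀ k, Measurable (fun x => chibar d n k y x) := by
    intro k
    simp only [chibar]
    exact Measurable.ite hset measurable_const
      ((continuous_Unk n k).measurable.comp hlogmeas)
  have hint : ∀ k, Integrable (fun x => phiNK d A n k y φ x) pr := by
    intro k
    have hm : Measurable (fun x => phiNK d A n k y φ x) := by
      unfold phiNK
      by_cases h : k = Mn A n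
      · simp only [if_pos h]
        exact hφmeas.mul (hchibarmeas k)
      · simp only [if_neg h]
        exact hφmeas.mul (hchimeas k)
    refine Integrable.mono' (integrable_const B) hm.aestronglyMeasurable
      (ae_of_all _ fun x => ?_)
    have hc : |(if k = Mn A n then chibar d n k y x else chi d n k y x)| ≤ 1 := by
      split_ifs
      · exact abs_chibar_le_one y x
      · exact abs_chi_le_one ha y x
    calc ‖phiNK d A n k y φ x‖
        = |φ x| * |(if k = Mn A n then chibar d n k y x else chi d n k y x)| := by
          rw [phiNK]; exact abs_mul _ _
      _ ≤ |φ x| * 1 := mul_le_mul_of_nonneg_left hc (abs_nonneg _)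
      _ ≤ B := by rw [mul_one]; exact hB x
  have hφint : Integrable φ pr :=
    Integrable.mono' (integrable_const B) hφmeas.aestronglyMeasurable (ae_of_all _ hB)
  have hgmeas : Measurable (fun x => ENNReal.ofReal (delta d x y) ^ (-η)) :=
    ENNReal.continuous_rpow_const.measurable.comp (ENNReal.measurable_ofReal.comp hδmeas)
  have hfin : ∫⁻ x, ENNReal.ofReal (delta d x y) ^ (-η) ∂pr ≠ ⊤ :=
    ne_top_of_le_ne_top ENNReal.ofReal_ne_top (hmom y)
  have hae : ∀ᵐ x ∂pr, delta d x y ≠ 0 := by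
    filter_upwards [ae_lt_top hgmeas hfin] with x hx
    intro h
    rw [h] at hx
    simp [ENNReal.zero_rpow_of_neg (neg_lt_zero.mpr hη)] at hx
  have hrint : Integrable (fun x => delta d x y ^ (-η)) pr := by
    have h := integrable_toReal_of_lintegral_ne_top hgmeas.aemeasurable hfin
    refine h.congr (ae_of_all _ fun x => ?_)
    simp only [← ENNReal.toReal_rpow, ENNReal.toReal_ofReal (delta_nonneg d x y)]
  have hlint : Integrable (fun x => φ x * Real.log (delta d x y)) pr := by
    refine Integrable.mono' (hrint.const_mul (B / η))
      ((hφmeas.mul (Real.measurable_log.comp hδmeas)).aestronglyMeasurable) ?_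
    filter_upwards [hae] with x hx
    have hδpos : 0 < delta d x y := lt_of_le_of_ne (delta_nonneg d x y) (Ne.symm hx)
    have hlog : Real.log (delta d x y) ≤ 0 :=
      Real.log_nonpos (delta_nonneg d x y) (delta_le_one d x y)
    have hrpos : 0 < delta d x y ^ (-η) := Real.rpow_pos_of_pos hδpos _
    have hkey : -Real.log (delta d x y) ≤ (1 / η) * delta d x y ^ (-η) := by
      have h1 : Real.log (delta d x y ^ (-η)) = (-η) * Real.log (delta d x y) :=
        Real.log_rpow hδpos (-η)
      have h2 : Real.log (delta d x y ^ (-η)) ≤ delta d x y ^ (-η) - 1 :=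
        Real.log_le_sub_one_of_pos hrpos
      have h3 : (-η) * Real.log (delta d x y) ≤ delta d x y ^ (-η) := by
        rw [← h1]; linarith
      rw [div_mul_eq_mul_div, le_div_iff₀ hη]
      nlinarith
    have hBnn : 0 ≤ B := le_trans (abs_nonneg _) (hB x)
    calc ‖φ x * Real.log (delta d x y)‖ = |φ x| * |Real.log (delta d x y)| := abs_mul _ _
      _ = |φ x| * (-Real.log (delta d x y)) := by rw [abs_of_nonpos hlog]
      _ ≤ B * ((1 / η) * delta d x y ^ (-η)) :=
          mul_le_mul (hB x) hkey (neg_nonneg.mpr hlog) hBnn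
      _ = B / η * delta d x y ^ (-η) := by ring
  have e1 : ∀ k ∈ Finset.range (Mn A n + 1),
      ((k:ℝ) + 1) * an n * ∫ x, phiNK d A n k y φ x ∂pr
        = ∫ x, ((k:ℝ) + 1) * an n * phiNK d A n k y φ x ∂pr :=
    fun k _ => (integral_const_mul _ _).symm
  rw [Finset.sum_congr rfl e1,
    ← integral_finset_sum _ (fun k _ => (hint k).const_mul _)]
  have hH : Integrable (fun x => -(φ x * Real.log (delta d x y)) + 2 * an n * φ x) pr :=
    hlint.neg.add (hφint.const_mul _)
  have hmono : ∫ x, (∑ k ∈ Finset.range (Mn A n + 1),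
        ((k:ℝ) + 1) * an n * phiNK d A n k y φ x) ∂pr
      ≤ ∫ x, (-(φ x * Real.log (delta d x y)) + 2 * an n * φ x) ∂pr := by
    refine integral_mono_ae
      (integrable_finset_sum _ (fun k _ => (hint k).const_mul _)) hH ?_
    filter_upwards [hae] with x hx
    exact key_pointwise d A n hn y x φ (hφpos x) hx
  refine hmono.trans_eq ?_
  have hneg : Integrable (fun x => -(φ x * Real.log (delta d x y))) pr := hlint.neg
  rw [integral_add hneg (hφint.const_mul (2 * an n)), integral_neg, integral_const_mul]
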